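/- Let y be a symmetric real random variable with distribution F_y and unique quantiles. Then MAD(F_y(ε, δ_{y₀})) → F_y^{-1}(3/4) as ε → 0⁺, for any fixed y₀ ∈ ℝ, where F_y(ε, δ_{y₀}) = (1−ε)F_y + ε δ_{y₀}. -/

import Mathlib

open MeasureTheory ProbabilityTheory Filter
open scoped ENNReal Topology

/-- ε-contamination `F(ε, G) = (1-ε)F + εG`. -/
noncomputable def mix {α : Type*} [MeasurableSpace α] (ε : ℝ) (F G : Measure α) : Measure α :=
  ENNReal.ofReal (1 - ε) • F + ENNReal.ofReal ε • G

/-- The `p`-th quantile of a measure on `ℝ`. -/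
noncomputable def quant (μ : Measure ℝ) (p : ℝ) : ℝ := sInf {x : ℝ | p ≤ cdf μ x}

/-- The median of a measure on `ℝ`. -/
noncomputable def med (μ : Measure ℝ) : ℝ := quant μ (1 / 2)

/-- The median absolute deviation. -/
noncomputable def mad (μ : Measure ℝ) : ℝ := med (μ.map fun t => |t - med μ|)

/-!
Unique quantiles make the cdf of `F` continuous and strictly increasing through every level in
`(0, 1)`. A quantile of a family of laws converges to `t` as soon as their cdfs converge near `t`
to a limit that crosses the level strictly at `t`. The contaminated cdfs converge pointwise to
`cdf F`, which crosses `1/2` at `0`, so the contaminated median tends to `0`. Consequently the cdf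
of `|Z - med|` converges, at every `x > 0`, to `F x - F (-x) = 2 F x - 1`, which crosses `1/2`
exactly at `F⁻¹(3/4)`.
-/

open Set Function

lemma quant_mem_Icc {μ : Measure ℝ} {p a b : ℝ} (ha : cdf μ a < p) (hb : p ≤ cdf μ b) :
    quant μ p ∈ Icc a b := by
  have hlb : a ∈ lowerBounds {x | p ≤ cdf μ x} := fun x hx =>
    le_of_not_gt fun hxa => ((monotone_cdf μ hxa.le).trans_lt ha).not_ge hx
  exact ⟨le_csInf ⟨b, hb⟩ hlb, csInf_le ⟨a, hlb⟩ hb⟩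

lemma quant_eq_of_cdf_eq {μ : Measure ℝ} {p t : ℝ} (ht : cdf μ t = p)
    (hlt : ∀ s < t, cdf μ s < p) : quant μ p = t := by
  have hlb : t ∈ lowerBounds {x | p ≤ cdf μ x} := fun x hx =>
    le_of_not_gt fun hxt => (hlt x hxt).not_ge hx
  exact le_antisymm (csInf_le ⟨t, hlb⟩ ht.ge) (le_csInf ⟨t, ht.ge⟩ hlb)

lemma tendsto_quant_of_tendsto_cdf {ι : Type*} {l : Filter ι} {μ : ι → Measure ℝ} {G : ℝ → ℝ}
    {p t : ℝ} (hμ : ∀ᶠ x in 𝓝 t, Tendsto (fun i => cdf (μ i) x) l (𝓝 (G x)))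
    (hG : ∀ η > 0, G (t - η) < p ∧ p < G (t + η)) :
    Tendsto (fun i => quant (μ i) p) l (𝓝 t) := by
  obtain ⟨δ, hδ, hball⟩ := Metric.eventually_nhds_iff.1 hμ
  refine Metric.tendsto_nhds.2 fun ρ hρ => ?_
  obtain ⟨η, hη, hηρ, hηδ⟩ : ∃ η > 0, η < ρ ∧ η < δ :=
    ⟨min ρ δ / 2, by positivity, by linarith [min_le_left ρ δ, lt_min hρ hδ],
      by linarith [min_le_right ρ δ, lt_min hρ hδ]⟩
  have hclose : ∀ s, |s| = η → dist (t + s) t < δ := fun s hs => by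
    rwa [Real.dist_eq, add_sub_cancel_left, hs]
  obtain ⟨hlo, hhi⟩ := hG η hη
  have hlo' := (hball (hclose (-η) (by simp [hη.le]))).eventually (gt_mem_nhds hlo)
  have hhi' := (hball (hclose η (abs_of_pos hη))).eventually (lt_mem_nhds hhi)
  rw [← sub_eq_add_neg] at hlo'
  filter_upwards [hlo', hhi'] with i hlo hhi
  obtain ⟨h₁, h₂⟩ := quant_mem_Icc hlo hhi.le
  rw [Real.dist_eq, abs_lt]
  constructor <;> linarith

section CdfFacts

variable {μ : Measure ℝ}

lemma cdf_lt_of_lt {p s t : ℝ} (hu : ∃! u, cdf μ u = p) (ht : cdf μ t = p) (hst : s < t) :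
    cdf μ s < p :=
  ((monotone_cdf μ hst.le).trans_eq ht).lt_of_ne fun hs => hst.ne (hu.unique hs ht)

lemma lt_cdf_of_lt {p s t : ℝ} (hu : ∃! u, cdf μ u = p) (ht : cdf μ t = p) (hts : t < s) :
    p < cdf μ s :=
  (ht.symm.trans_le (monotone_cdf μ hts.le)).lt_of_ne' fun hs => hts.ne' (hu.unique hs ht)

lemma continuous_cdf_of_Ioo_subset_range (h : Ioo 0 1 ⊆ range (cdf μ)) :
    Continuous (cdf μ) := by
  refine continuous_iff_continuousAt.2 fun a =>
    (monotone_cdf μ).continuousAt_iff_leftLim_eq_rightLim.2 ?_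
  rw [StieltjesFunction.rightLim_eq]
  refine ((monotone_cdf μ).leftLim_le le_rfl).antisymm (not_lt.1 fun hjump => ?_)
  -- a jump at `a` would leave the values strictly inside it unattained
  obtain ⟨q, hLq, hqa⟩ := exists_between hjump
  have h0 : 0 ≤ leftLim (cdf μ) a :=
    (cdf_nonneg μ (a - 1)).trans ((monotone_cdf μ).le_leftLim (sub_one_lt a))
  obtain ⟨s, rfl⟩ := h ⟨h0.trans_lt hLq, hqa.trans_le (cdf_le_one μ a)⟩
  rcases lt_or_ge s a with hs | hs
  · exact ((monotone_cdf μ).le_leftLim hs).not_gt hLq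
  · exact (monotone_cdf μ hs).not_gt hqa

lemma leftLim_cdf_of_continuous (hμ : Continuous (cdf μ)) (a : ℝ) :
    leftLim (cdf μ) a = cdf μ a :=
  leftLim_eq_of_tendsto (hμ.continuousAt.tendsto.mono_left nhdsWithin_le_nhds)

variable [IsProbabilityMeasure μ]

lemma measureReal_Icc_of_continuous_cdf (hμ : Continuous (cdf μ)) {a b : ℝ} (hab : a ≤ b) :
    μ.real (Icc a b) = cdf μ b - cdf μ a := by
  rw [measureReal_def]
  conv_lhs => rw [← measure_cdf μ]
  rw [StieltjesFunction.measure_Icc, leftLim_cdf_of_continuous hμ,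
    ENNReal.toReal_ofReal (sub_nonneg.2 (monotone_cdf μ hab))]

lemma cdf_neg_of_map_neg (hsymm : μ.map (fun t => -t) = μ) (hμ : Continuous (cdf μ)) (x : ℝ) :
    cdf μ (-x) = 1 - cdf μ x := by
  have hIci : μ (Ici x) = ENNReal.ofReal (1 - cdf μ x) := by
    conv_lhs => rw [← measure_cdf μ]
    rw [StieltjesFunction.measure_Ici _ (tendsto_cdf_atTop μ), leftLim_cdf_of_continuous hμ]
  have hrefl : μ (Iic (-x)) = μ (Ici x) := by
    conv_lhs => rw [← hsymm]
    rw [Measure.map_apply measurable_neg measurableSet_Iic]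
    congr 1
    ext t
    simp
  rw [← ofReal_cdf, hIci] at hrefl
  exact (ENNReal.ofReal_eq_ofReal_iff (cdf_nonneg μ _) (sub_nonneg.2 (cdf_le_one μ x))).1 hrefl

lemma cdf_map_abs_sub (hμ : Continuous (cdf μ)) (c : ℝ) {x : ℝ} (hx : 0 ≤ x) :
    cdf (μ.map fun s => |s - c|) x = cdf μ (c + x) - cdf μ (c - x) := by
  have hmeas : Measurable fun s : ℝ => |s - c| := by fun_prop
  have := Measure.isProbabilityMeasure_map (μ := μ) hmeas.aemeasurable
  have hpre : (fun s : ℝ => |s - c|) ⁻¹' Iic x = Icc (c - x) (c + x) := by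
    ext s
    simp only [mem_preimage, mem_Iic, mem_Icc, abs_le]
    constructor <;> rintro ⟨h₁, h₂⟩ <;> constructor <;> linarith
  rw [cdf_eq_real, map_measureReal_apply hmeas measurableSet_Iic, hpre,
    measureReal_Icc_of_continuous_cdf hμ (by linarith)]

end CdfFacts

section Mix

variable {ε : ℝ}

lemma isProbabilityMeasure_mix {α : Type*} [MeasurableSpace α] (μ ν : Measure α)
    [IsProbabilityMeasure μ] [IsProbabilityMeasure ν] (hε0 : 0 ≤ ε) (hε1 : ε ≤ 1) :
    IsProbabilityMeasure (mix ε μ ν) := by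
  constructor
  simp only [mix, Measure.add_apply, Measure.smul_apply, smul_eq_mul, measure_univ, mul_one]
  rw [← ENNReal.ofReal_add (by linarith) hε0]
  norm_num

lemma map_mix {α β : Type*} [MeasurableSpace α] [MeasurableSpace β] {f : α → β}
    (hf : Measurable f) (μ ν : Measure α) : (mix ε μ ν).map f = mix ε (μ.map f) (ν.map f) := by
  rw [mix, Measure.map_add _ _ hf, Measure.map_smul, Measure.map_smul, mix]

lemma cdf_mix (μ ν : Measure ℝ) [IsProbabilityMeasure μ] [IsProbabilityMeasure ν]
    (hε0 : 0 ≤ ε) (hε1 : ε ≤ 1) (x : ℝ) :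
    cdf (mix ε μ ν) x = (1 - ε) * cdf μ x + ε * cdf ν x := by
  have := isProbabilityMeasure_mix μ ν hε0 hε1
  rw [cdf_eq_real, cdf_eq_real, cdf_eq_real]
  simp only [mix, measureReal_def, Measure.add_apply, Measure.smul_apply, smul_eq_mul]
  rw [ENNReal.toReal_add (by finiteness) (by finiteness), ENNReal.toReal_mul, ENNReal.toReal_mul,
    ENNReal.toReal_ofReal (by linarith), ENNReal.toReal_ofReal hε0]

lemma tendsto_cdf_mix {μ ν : ℝ → Measure ℝ} [∀ ε, IsProbabilityMeasure (μ ε)]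
    [∀ ε, IsProbabilityMeasure (ν ε)] {x c : ℝ}
    (h : Tendsto (fun ε => cdf (μ ε) x) (𝓝[>] 0) (𝓝 c)) :
    Tendsto (fun ε => cdf (mix ε (μ ε) (ν ε)) x) (𝓝[>] 0) (𝓝 c) := by
  have hε : Tendsto (fun ε : ℝ => ε) (𝓝[>] 0) (𝓝 0) := nhdsWithin_le_nhds
  have hbdd : IsBoundedUnder (· ≤ ·) (𝓝[>] 0) fun ε => ‖cdf (ν ε) x‖ :=
    isBoundedUnder_of ⟨1, fun ε => by
      simpa [abs_of_nonneg (cdf_nonneg _ _)] using cdf_le_one (ν ε) x⟩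
  have hlim := ((tendsto_const_nhds (x := (1 : ℝ))).sub hε).mul h
    |>.add (hε.zero_mul_isBoundedUnder_le hbdd)
  rw [sub_zero, one_mul, add_zero] at hlim
  refine hlim.congr' ?_
  filter_upwards [Ioo_mem_nhdsGT one_pos] with ε hε
  rw [cdf_mix _ _ hε.1.le hε.2.le]

end Mix

section Contamination

variable {F : Measure ℝ} [IsProbabilityMeasure F] (y₀ : ℝ)

lemma tendsto_med_mix_dirac (hcross : ∀ η > 0, cdf F (-η) < 1 / 2 ∧ 1 / 2 < cdf F η) :
    Tendsto (fun ε => med (mix ε F (Measure.dirac y₀))) (𝓝[>] 0) (𝓝 0) :=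
  tendsto_quant_of_tendsto_cdf (G := cdf F)
    (.of_forall fun _ => tendsto_cdf_mix (μ := fun _ => F) tendsto_const_nhds)
    (by simpa using hcross)

lemma tendsto_mad_mix_dirac (hF : Continuous (cdf F)) (hsym : ∀ x, cdf F (-x) = 1 - cdf F x)
    (hcross₀ : ∀ η > 0, cdf F (-η) < 1 / 2 ∧ 1 / 2 < cdf F η) {t : ℝ} (ht : 0 < t)
    (hcross : ∀ η > 0, cdf F (t - η) < 3 / 4 ∧ 3 / 4 < cdf F (t + η)) :
    Tendsto (fun ε => mad (mix ε F (Measure.dirac y₀))) (𝓝[>] 0) (𝓝 t) := by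
  set m := fun ε => med (mix ε F (Measure.dirac y₀))
  have hm : Tendsto m (𝓝[>] 0) (𝓝 0) := tendsto_med_mix_dirac y₀ hcross₀
  have hmeas (c : ℝ) : Measurable fun s : ℝ => |s - c| := by fun_prop
  have (ε : ℝ) : IsProbabilityMeasure (F.map fun s => |s - m ε|) :=
    Measure.isProbabilityMeasure_map (hmeas _).aemeasurable
  have hmad (ε : ℝ) : mad (mix ε F (Measure.dirac y₀))
      = med (mix ε (F.map fun s => |s - m ε|) (Measure.dirac |y₀ - m ε|)) := by
    rw [mad, map_mix (hmeas _), Measure.map_dirac' (hmeas _)]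
  simp only [hmad]
  refine tendsto_quant_of_tendsto_cdf (G := fun x => cdf F x - cdf F (-x)) ?_ fun η hη => ?_
  · filter_upwards [lt_mem_nhds ht] with x hx
    refine tendsto_cdf_mix ?_
    have hplus : Tendsto (fun ε => m ε + x) (𝓝[>] 0) (𝓝 x) := by simpa using hm.add_const x
    have hminus : Tendsto (fun ε => m ε - x) (𝓝[>] 0) (𝓝 (-x)) := by simpa using hm.sub_const x
    have h := ((hF.tendsto x).comp hplus).sub ((hF.tendsto (-x)).comp hminus)
    exact h.congr fun ε => (cdf_map_abs_sub hF _ hx.le).symm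
  · simp only [hsym]
    constructor <;> linarith [hcross η hη]

end Contamination

theorem stmt12_general (F : Measure ℝ) [IsProbabilityMeasure F]
    -- y symmetric about 0
    (hsymm : F.map (fun t => -t) = F)
    -- quantiles of F_y exist uniquely
    (huniq : ∀ q ∈ Set.Ioo (0 : ℝ) 1, ∃! t : ℝ, cdf F t = q)
    (y₀ : ℝ) :
    Tendsto (fun ε : ℝ => mad (mix ε F (Measure.dirac y₀)))
      (𝓝[>] 0) (𝓝 (quant F (3 / 4))) := by
  have hF : Continuous (cdf F) :=
    continuous_cdf_of_Ioo_subset_range fun q hq => (huniq q hq).exists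
  have hsym := cdf_neg_of_map_neg hsymm hF
  have hcross {p t : ℝ} (hp : p ∈ Ioo 0 1) (ht : cdf F t = p) (η : ℝ) (hη : 0 < η) :
      cdf F (t - η) < p ∧ p < cdf F (t + η) :=
    ⟨cdf_lt_of_lt (huniq p hp) ht (by linarith), lt_cdf_of_lt (huniq p hp) ht (by linarith)⟩
  have hhalf : cdf F 0 = 1 / 2 := by linarith [neg_zero (G := ℝ) ▸ hsym 0]
  obtain ⟨t, ht, -⟩ := huniq (3 / 4) ⟨by norm_num, by norm_num⟩
  have ht0 : 0 < t := lt_of_not_ge fun h => by linarith [monotone_cdf F h]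
  rw [quant_eq_of_cdf_eq ht fun s => cdf_lt_of_lt (huniq _ ⟨by norm_num, by norm_num⟩) ht]
  exact tendsto_mad_mix_dirac y₀ hF hsym (by simpa using hcross ⟨by norm_num, by norm_num⟩ hhalf)
    ht0 (hcross ⟨by norm_num, by norm_num⟩ ht)

/-- `MAD(F_y(ε, δ_{y₀})) → F_y⁻¹(3/4)` as `ε → 0⁺`, for `y` symmetric
with unique quantiles. -/
theorem stmt12 (F : Measure ℝ) [IsProbabilityMeasure F]
    -- y symmetric about 0
    (hsymm : F.map (fun t => -t) = F)
    -- quantiles of F_y exist uniquely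
    (huniq : ∀ q ∈ Set.Ioo (0 : ℝ) 1, ∃! t : ℝ, cdf F t = q)
    -- quantiles of F_{|y−c|} exist uniquely
    (huniq2 : ∀ c : ℝ, ∀ q ∈ Set.Ioo (0 : ℝ) 1,
      ∃! t : ℝ, cdf (F.map fun s => |s - c|) t = q)
    (y₀ : ℝ) :
    Tendsto (fun ε : ℝ => mad (mix ε F (Measure.dirac y₀)))
      (𝓝[>] 0) (𝓝 (quant F (3 / 4))) :=
  stmt12_general F hsymm huniq y₀
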